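/- arXiv:1106.0535 — 2 statements merged into one kernel-verified Lean document; each statement's English description precedes it below -/
import Mathlib

section
/- In type A_2, the number of marginally large tableaux b of rank 2 with −wt(b) = m α_1 + n α_2 (m, n ≥ 0) equals min(m, n) + 1, and the sum ∑_b (1 − t⁻¹)^{seg(b)} over these tableaux equals the coefficient of z_1^m z_2^n in (1 − t⁻¹z_1)(1 − t⁻¹z_2)(1 − t⁻¹z_1z_2) / ((1 − z_1)(1 − z_2)(1 − z_1z_2)). -/
open MvPowerSeries

/-- Monomials in `ℤ[t⁻¹][[z_1, z_2]]`: `z^{α_1} = z_1`, `z^{α_2} = z_2`,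
`z^{α_1+α_2} = z_1 z_2`. -/
noncomputable def Zm (v : Fin 2 → ℕ) : MvPowerSeries (Fin 2) (Polynomial ℤ) :=
  MvPowerSeries.monomial (R := Polynomial ℤ) (Finsupp.equivFunOnFinite.symm v) 1

/-- `seg(b)` for a rank-2 marginally large tableau encoded by
`(n_{1,2}, n_{2,3}, n_{1,3})`: the number of nonzero entries. -/
def nz3 (c : ℕ × ℕ × ℕ) : ℕ :=
  (if c.1 = 0 then 0 else 1) + (if c.2.1 = 0 then 0 else 1) + (if c.2.2 = 0 then 0 else 1)

/-- The (finite) set of rank-2 marginally large tableaux, encoded as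
`(n_{1,2}, n_{2,3}, n_{1,3})`, with `-wt(b) = m α_1 + n α_2`, i.e.
`n_{1,2} + n_{1,3} = m` and `n_{2,3} + n_{1,3} = n` (all solutions satisfy the box
bounds used below). -/
def wtFiber (m n : ℕ) : Finset (ℕ × ℕ × ℕ) :=
  (Finset.range (m + 1) ×ˢ Finset.range (n + 1) ×ˢ Finset.range (min m n + 1)).filter
    (fun c => c.1 + c.2.2 = m ∧ c.2.1 + c.2.2 = n)

/-!
Write `u = 1 - t⁻¹` (with `t⁻¹ = Polynomial.X`), `w(0) = 1` and `w(j) = u` for `j > 0`. Then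
`u ^ seg(b) = w(n₁₂) w(n₂₃) w(n₁₃)` and `∑ⱼ w(j) zʲ = (1 - t⁻¹z)/(1 - z)`, so the generating series
`S` of the fibre sums is the product of three such factors, at `z₁`, `z₂` and `z₁z₂`. Instead of
multiplying infinite series, one checks
`(1 - z₁)(1 - z₂)(1 - z₁z₂) S = (1 - t⁻¹z₁)(1 - t⁻¹z₂)(1 - t⁻¹z₁z₂)` coefficientwise:
multiplying by `1 - z₁z₂` turns `S` into `(1 - t⁻¹z₁z₂)` times the separable series `w(m) w(n)`,
by the recurrence `S(m+1, n+1) = S(m, n) + w(m+1) w(n+1) - t⁻¹ w(m) w(n)`, and the remaining two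
factors act on the separable series one variable at a time. The fibre itself is parametrised by
`n₁₃ ∈ [0, min m n]`, which gives the count.
-/

namespace MvPowerSeries

variable {σ R : Type*} [CommRing R]

theorem coeff_one_sub_monomial_mul (e v : σ →₀ ℕ) (r : R) (φ : MvPowerSeries σ R) :
    coeff v ((1 - monomial e r) * φ) = coeff v φ - if e ≤ v then r * coeff (v - e) φ else 0 := by
  rw [sub_mul, one_mul, map_sub, coeff_monomial_mul]

end MvPowerSeries

section TwoVariables

variable {R : Type*} [CommRing R]

noncomputable abbrev bidegree (a b : ℕ) : Fin 2 →₀ ℕ := Finsupp.equivFunOnFinite.symm ![a, b]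

theorem bidegree_le_bidegree {a b c d : ℕ} : bidegree a b ≤ bidegree c d ↔ a ≤ c ∧ b ≤ d := by
  simp [Finsupp.le_def, Fin.forall_fin_two]

theorem bidegree_sub_bidegree (a b c d : ℕ) :
    bidegree c d - bidegree a b = bidegree (c - a) (d - b) := by
  ext i; fin_cases i <;> rfl

def ofCoeffs₂ (F : ℕ → ℕ → R) : MvPowerSeries (Fin 2) R := fun v => F (v 0) (v 1)

@[simp]
theorem coeff_bidegree_ofCoeffs₂ (F : ℕ → ℕ → R) (m n : ℕ) :
    MvPowerSeries.coeff (bidegree m n) (ofCoeffs₂ F) = F m n := rfl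

theorem ofCoeffs₂_coeff (φ : MvPowerSeries (Fin 2) R) :
    ofCoeffs₂ (fun m n => MvPowerSeries.coeff (bidegree m n) φ) = φ := by
  funext v
  exact congrArg φ (Finsupp.ext <| Fin.forall_fin_two.2 ⟨rfl, rfl⟩)

theorem one_eq_ofCoeffs₂ :
    (1 : MvPowerSeries (Fin 2) R) = ofCoeffs₂ (fun m n => if m = 0 ∧ n = 0 then 1 else 0) := by
  rw [← ofCoeffs₂_coeff 1]
  congr! 3 with m n
  simp [MvPowerSeries.coeff_one, Finsupp.ext_iff, Fin.forall_fin_two]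

theorem one_sub_monomial_mul_ofCoeffs₂ (a b : ℕ) (r : R) (F : ℕ → ℕ → R) :
    (1 - MvPowerSeries.monomial (bidegree a b) r) * ofCoeffs₂ F =
      ofCoeffs₂ (fun m n => F m n - if a ≤ m ∧ b ≤ n then r * F (m - a) (n - b) else 0) := by
  rw [← ofCoeffs₂_coeff ((1 - _) * _)]
  congr! 3 with m n
  simp only [MvPowerSeries.coeff_one_sub_monomial_mul, bidegree_le_bidegree, bidegree_sub_bidegree,
    coeff_bidegree_ofCoeffs₂]

end TwoVariables

open scoped Polynomial

noncomputable section Fibre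

def segWeight (j : ℕ) : ℤ[X] := if j = 0 then 1 else 1 - Polynomial.X

@[simp]
theorem segWeight_zero : segWeight 0 = 1 := rfl

@[simp]
theorem segWeight_succ (j : ℕ) : segWeight (j + 1) = 1 - Polynomial.X := rfl

theorem one_sub_X_pow_nz3 (c : ℕ × ℕ × ℕ) :
    (1 - Polynomial.X : ℤ[X]) ^ nz3 c = segWeight c.1 * segWeight c.2.1 * segWeight c.2.2 := by
  simp only [nz3, segWeight, pow_add]
  split_ifs <;> simp

theorem wtFiber_eq_image (m n : ℕ) :
    wtFiber m n = (Finset.range (min m n + 1)).image (fun k => (m - k, n - k, k)) := by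
  ext ⟨a, b, k⟩
  simp only [wtFiber, Finset.mem_filter, Finset.mem_product, Finset.mem_range, Finset.mem_image,
    Prod.mk.injEq]
  constructor
  · rintro ⟨-, ha, hb⟩
    exact ⟨k, by omega, by omega, by omega, rfl⟩
  · rintro ⟨k, hk, rfl, rfl, rfl⟩
    omega

theorem wtFiber_param_injective (m n : ℕ) : Function.Injective (fun k : ℕ => (m - k, n - k, k)) :=
  fun _ _ h => congrArg (fun c : ℕ × ℕ × ℕ => c.2.2) h

theorem card_wtFiber (m n : ℕ) : (wtFiber m n).card = min m n + 1 := by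
  rw [wtFiber_eq_image, Finset.card_image_of_injective _ (wtFiber_param_injective m n),
    Finset.card_range]

def fiberSum (m n : ℕ) : ℤ[X] := ∑ c ∈ wtFiber m n, (1 - Polynomial.X) ^ nz3 c

theorem fiberSum_eq_sum_range (m n : ℕ) :
    fiberSum m n =
      ∑ k ∈ Finset.range (min m n + 1), segWeight (m - k) * segWeight (n - k) * segWeight k := by
  rw [fiberSum, wtFiber_eq_image, Finset.sum_image fun _ _ _ _ h => wtFiber_param_injective m n h]
  simp only [one_sub_X_pow_nz3]

theorem fiberSum_zero_right (m : ℕ) : fiberSum m 0 = segWeight m := by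
  simp [fiberSum_eq_sum_range, segWeight]

theorem fiberSum_zero_left (n : ℕ) : fiberSum 0 n = segWeight n := by
  simp [fiberSum_eq_sum_range, segWeight]

theorem fiberSum_succ_succ (m n : ℕ) :
    fiberSum (m + 1) (n + 1) = fiberSum m n + segWeight (m + 1) * segWeight (n + 1)
      - Polynomial.X * (segWeight m * segWeight n) := by
  have hmin : min (m + 1) (n + 1) + 1 = min m n + 1 + 1 := by omega
  rw [fiberSum_eq_sum_range, fiberSum_eq_sum_range, hmin, Finset.sum_range_succ',
    Finset.sum_range_succ', Finset.sum_range_succ']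
  simp only [segWeight_zero, segWeight_succ, Nat.add_sub_add_right, Nat.sub_zero, mul_one]
  ring

end Fibre

noncomputable section GeneratingFunction

theorem Zm_eq_monomial (a b : ℕ) : Zm ![a, b] = monomial (bidegree a b) 1 := rfl

theorem C_mul_Zm (r : ℤ[X]) (a b : ℕ) : C r * Zm ![a, b] = monomial (bidegree a b) r := by
  rw [Zm_eq_monomial, ← monomial_zero_eq_C_apply, monomial_mul_monomial, zero_add, mul_one]

theorem constantCoeff_one_sub_Zm {a b : ℕ} (h : a ≠ 0 ∨ b ≠ 0) :
    constantCoeff (1 - Zm ![a, b]) = 1 := by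
  rw [map_sub, map_one, ← coeff_zero_eq_constantCoeff_apply, Zm_eq_monomial, coeff_monomial,
    if_neg, sub_zero]
  intro h0
  simp [Finsupp.ext_iff, Fin.forall_fin_two] at h0
  omega

theorem diagonal_factor_mul_ofCoeffs₂_fiberSum :
    (1 - monomial (bidegree 1 1) 1) * ofCoeffs₂ fiberSum =
      (1 - monomial (bidegree 1 1) Polynomial.X) *
        ofCoeffs₂ (fun m n => segWeight m * segWeight n) := by
  simp only [one_sub_monomial_mul_ofCoeffs₂]
  congr 1; funext m n
  rcases m with _ | m <;> rcases n with _ | n <;>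
    simp [fiberSum_zero_left, fiberSum_zero_right, fiberSum_succ_succ]
  ring

theorem axis_factors_mul_ofCoeffs₂_segWeight :
    (1 - monomial (bidegree 1 0) 1) * (1 - monomial (bidegree 0 1) 1) *
        ofCoeffs₂ (fun m n => segWeight m * segWeight n) =
      (1 - monomial (bidegree 1 0) Polynomial.X) * (1 - monomial (bidegree 0 1) Polynomial.X) := by
  have hδ : (1 - monomial (bidegree 0 1) Polynomial.X : MvPowerSeries (Fin 2) ℤ[X]) =
      (1 - monomial (bidegree 0 1) Polynomial.X) *
        ofCoeffs₂ (fun m n => if m = 0 ∧ n = 0 then 1 else 0) := by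
    rw [← one_eq_ofCoeffs₂, mul_one]
  rw [hδ, mul_assoc]
  simp only [one_sub_monomial_mul_ofCoeffs₂]
  congr 1; funext m n
  rcases m with _ | _ | m <;> rcases n with _ | _ | n <;> simp [segWeight]
  ring

theorem denominator_mul_ofCoeffs₂_fiberSum :
    (1 - Zm ![1, 0]) * (1 - Zm ![0, 1]) * (1 - Zm ![1, 1]) * ofCoeffs₂ fiberSum =
      (1 - C Polynomial.X * Zm ![1, 0]) * (1 - C Polynomial.X * Zm ![0, 1]) *
        (1 - C Polynomial.X * Zm ![1, 1]) := by
  rw [C_mul_Zm, C_mul_Zm, C_mul_Zm]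
  simp only [Zm_eq_monomial]
  linear_combination
    (1 - monomial (bidegree 1 0) 1) * (1 - monomial (bidegree 0 1) 1) *
        diagonal_factor_mul_ofCoeffs₂_fiberSum +
      (1 - monomial (bidegree 1 1) Polynomial.X) * axis_factors_mul_ofCoeffs₂_segWeight

theorem numerator_mul_invOfUnit_denominator :
    (1 - C Polynomial.X * Zm ![1, 0]) * (1 - C Polynomial.X * Zm ![0, 1]) *
        (1 - C Polynomial.X * Zm ![1, 1]) *
        invOfUnit ((1 - Zm ![1, 0]) * (1 - Zm ![0, 1]) * (1 - Zm ![1, 1])) 1 =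
      ofCoeffs₂ fiberSum := by
  have hB : constantCoeff ((1 - Zm ![1, 0]) * (1 - Zm ![0, 1]) * (1 - Zm ![1, 1])) =
      ((1 : ℤ[X]ˣ) : ℤ[X]) := by
    simp [constantCoeff_one_sub_Zm]
  rw [← denominator_mul_ofCoeffs₂_fiberSum, mul_right_comm, mul_invOfUnit _ _ hB, one_mul]

end GeneratingFunction

/-- in type `A_2`, the number of marginally large tableaux with
`-wt(b) = m α_1 + n α_2` is `min(m,n) + 1`, and `∑_b (1 - t⁻¹)^{seg(b)}` over these
tableaux equals the coefficient of `z_1^m z_2^n` in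
`(1-t⁻¹z_1)(1-t⁻¹z_2)(1-t⁻¹z_1z_2)/((1-z_1)(1-z_2)(1-z_1z_2))`. -/
theorem gk_A2_coefficients (m n : ℕ) :
    (wtFiber m n).card = min m n + 1 ∧
    (∑ c ∈ wtFiber m n, ((1 : Polynomial ℤ) - Polynomial.X) ^ nz3 c) =
      MvPowerSeries.coeff (R := Polynomial ℤ) (Finsupp.equivFunOnFinite.symm ![m, n])
        ((1 - MvPowerSeries.C (σ := Fin 2) (R := Polynomial ℤ) Polynomial.X * Zm ![1, 0]) *
         (1 - MvPowerSeries.C (σ := Fin 2) (R := Polynomial ℤ) Polynomial.X * Zm ![0, 1]) *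
         (1 - MvPowerSeries.C (σ := Fin 2) (R := Polynomial ℤ) Polynomial.X * Zm ![1, 1]) *
         MvPowerSeries.invOfUnit
           ((1 - Zm ![1, 0]) * (1 - Zm ![0, 1]) * (1 - Zm ![1, 1])) 1) := by
  refine ⟨card_wtFiber m n, ?_⟩
  rw [numerator_mul_invOfUnit_denominator]
  exact (coeff_bidegree_ofCoeffs₂ fiberSum m n).symm
end

section
/- Every indecomposable finite-dimensional representation of the linearly oriented A_r quiver 1 ← 2 ← … ← r is isomorphic to V(k,ℓ) for a unique pair 1 ≤ k ≤ ℓ ≤ r (Gabriel's theorem in type A for the linear orientation). -/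
/-- The interval representation `V(k,ℓ)` of the linearly oriented `A_r` quiver
`1 ← 2 ← ⋯ ← r`: vertex `i` carries `ℂ` if `k ≤ i ≤ ℓ` and `0` otherwise (realized as
the submodules `⊤`, `⊥` of `ℂ`). -/
noncomputable def intervalSpace {r : ℕ} (k ℓ : Fin r) (i : Fin r) : Submodule ℂ ℂ :=
  if k ≤ i ∧ i ≤ ℓ then ⊤ else ⊥

/-- The structure map of `V(k,ℓ)` along the arrow `i+1 → i`: the identity between
consecutive nonzero spaces, and `0` otherwise. -/
noncomputable def intervalMap {r : ℕ} (k ℓ : Fin r) (i : Fin r) (h : i.1 + 1 < r) :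
    intervalSpace k ℓ ⟨i.1 + 1, h⟩ →ₗ[ℂ] intervalSpace k ℓ i where
  toFun v :=
    if hc : k.1 ≤ i.1 ∧ i.1 + 1 ≤ ℓ.1 then
      ⟨v.1, by
        have : k ≤ i ∧ i ≤ ℓ :=
          ⟨Fin.le_def.mpr hc.1, Fin.le_def.mpr (by omega)⟩
        simp [intervalSpace, this]⟩
    else 0
  map_add' a b := by split_ifs <;> simp
  map_smul' c a := by split_ifs <;> simp

/-!
Let `ℓ` be the largest vertex with `V ℓ ≠ 0` and pick `w ≠ 0` in `V ℓ`. Pushing `w` down the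
arrows gives a string `v i ∈ V i` (`v ℓ = w`, `v i = x (v (i + 1))`); let `k` be the least
vertex with `v k ≠ 0`, so `v` is nonzero exactly on `[k, ℓ]`. A functional `g` on `V k` with
`g (v k) = 1`, pulled back along the arrows, gives functionals `f i` with `f i (v i) = 1` and
`f (i + 1) = f i ∘ x`. The lines `K ∙ v i` on `[k, ℓ]` and the kernels of the `f i` (all of
`V i` outside `[k, ℓ]`) are complementary subrepresentations: the first is closed under the
arrows because `v (k - 1) = 0`, the second because `V i = 0` above `ℓ`. Indecomposability kills
the second one, so `V i = K ∙ v i` on `[k, ℓ]` and `V i = 0` elsewhere, and the `f i` assemble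
into an isomorphism with `V(k, ℓ)`. The interval is the support of `V`, hence unique.
-/
namespace LinearQuiver

section Semiring

variable {R : Type*} [Semiring R] {r : ℕ} {V : Fin r → Type*} [∀ i, AddCommMonoid (V i)]
  [∀ i, Module R (V i)] (x : ∀ (i : Fin r) (h : i.1 + 1 < r), V ⟨i.1 + 1, h⟩ →ₗ[R] V i)

/-- The composite `V j → V (j - 1) → ⋯ → V i` of the arrows from `j` down to `i`; it is `0`
when `j < i`. -/
noncomputable def pathMap (i : Fin r) : (j : Fin r) → V j →ₗ[R] V i
  | ⟨0, hj⟩ => if h : i = ⟨0, hj⟩ then by subst h; exact LinearMap.id else 0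
  | ⟨m + 1, hj⟩ =>
      if h : i = ⟨m + 1, hj⟩ then by subst h; exact LinearMap.id
      else if i.1 ≤ m then pathMap i ⟨m, by omega⟩ ∘ₗ x ⟨m, by omega⟩ hj else 0

theorem pathMap_self (i : Fin r) : pathMap x i i = LinearMap.id := by
  obtain ⟨_ | m, hi⟩ := i <;> simp [pathMap]

theorem pathMap_succ (i : Fin r) (m : ℕ) (hm : m + 1 < r) (him : i.1 ≤ m) :
    pathMap x i ⟨m + 1, hm⟩ = pathMap x i ⟨m, by omega⟩ ∘ₗ x ⟨m, by omega⟩ hm := by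
  rw [pathMap, dif_neg (by rintro rfl; simp at him), if_pos him]

theorem pathMap_trans {i j : Fin r} (hij : i ≤ j) :
    ∀ m : Fin r, j ≤ m → pathMap x i m = pathMap x i j ∘ₗ pathMap x j m := by
  rintro ⟨m, hm⟩ hjm
  induction m with
  | zero =>
    have : j.1 ≤ 0 := hjm
    obtain rfl : i = j := Fin.ext (by have : i.1 ≤ j.1 := hij; omega)
    rw [pathMap_self, LinearMap.id_comp]
  | succ m ih =>
    rcases eq_or_lt_of_le hjm with rfl | hlt
    · rw [pathMap_self, LinearMap.comp_id]
    · have hjm' : j.1 ≤ m := Nat.le_of_lt_succ hlt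
      rw [pathMap_succ x i m hm ((Fin.le_def.mp hij).trans hjm'),
        pathMap_succ x j m hm hjm', ih (by omega) hjm', LinearMap.comp_assoc]

theorem pathMap_eq_comp_pathMap_succ (i : Fin r) (h : i.1 + 1 < r) (m : Fin r)
    (him : i.1 + 1 ≤ m.1) : pathMap x i m = x i h ∘ₗ pathMap x ⟨i.1 + 1, h⟩ m := by
  rw [pathMap_trans x (j := ⟨i.1 + 1, h⟩) (Nat.le_succ _) m him,
    pathMap_succ x i i.1 h le_rfl, pathMap_self, LinearMap.id_comp]

def IsSubrep (W : ∀ i, Submodule R (V i)) : Prop :=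
  ∀ (i : Fin r) (h : i.1 + 1 < r), (W ⟨i.1 + 1, h⟩).map (x i h) ≤ W i

def IsIndecomposable : Prop :=
  ∀ W W' : ∀ i, Submodule R (V i), IsSubrep x W → IsSubrep x W' →
    (∀ i, IsCompl (W i) (W' i)) → (∀ i, W i = ⊥) ∨ (∀ i, W' i = ⊥)

end Semiring

section Field

variable {K : Type*} [Field K] {r : ℕ} {V : Fin r → Type*} [∀ i, AddCommGroup (V i)]
  [∀ i, Module K (V i)] (x : ∀ (i : Fin r) (h : i.1 + 1 < r), V ⟨i.1 + 1, h⟩ →ₗ[K] V i)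

def stringSpan (k ℓ : Fin r) (v : ∀ i, V i) (i : Fin r) : Submodule K (V i) :=
  if k ≤ i ∧ i ≤ ℓ then K ∙ v i else ⊥

def stringKer (k ℓ : Fin r) (f : ∀ i, V i →ₗ[K] K) (i : Fin r) : Submodule K (V i) :=
  if k ≤ i ∧ i ≤ ℓ then LinearMap.ker (f i) else ⊤

theorem isSubrep_stringSpan {k ℓ : Fin r} {v : ∀ i, V i}
    (hv : ∀ (i : Fin r) (h : i.1 + 1 < r), i.1 + 1 ≤ ℓ.1 → x i h (v ⟨i.1 + 1, h⟩) = v i)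
    (hmin : ∀ i, i < k → v i = 0) :
    IsSubrep x (stringSpan k ℓ v) := by
  intro i h
  by_cases hj : k ≤ ⟨i.1 + 1, h⟩ ∧ ⟨i.1 + 1, h⟩ ≤ ℓ
  · rw [stringSpan, if_pos hj, Submodule.map_span, Set.image_singleton, hv i h hj.2, stringSpan]
    by_cases hi : k ≤ i ∧ i ≤ ℓ
    · rw [if_pos hi]
    · have hiℓ : i.1 + 1 ≤ ℓ.1 := hj.2
      have hik : i < k := lt_of_not_ge fun hki => hi ⟨hki, Fin.le_def.mpr (by omega)⟩
      simp [hmin i hik]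
  · simp [stringSpan, if_neg hj]

theorem isSubrep_stringKer {k ℓ : Fin r} {f : ∀ i, V i →ₗ[K] K}
    (hℓ : ∀ i, ℓ < i → Subsingleton (V i))
    (hf : ∀ (i : Fin r) (h : i.1 + 1 < r), k ≤ i → ∀ b, f ⟨i.1 + 1, h⟩ b = f i (x i h b)) :
    IsSubrep x (stringKer k ℓ f) := by
  rintro i h _ ⟨b, hb, rfl⟩
  by_cases hi : k ≤ i ∧ i ≤ ℓ
  · by_cases hjℓ : i.1 + 1 ≤ ℓ.1
    · have hj : k ≤ ⟨i.1 + 1, h⟩ ∧ ⟨i.1 + 1, h⟩ ≤ ℓ :=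
        ⟨hi.1.trans (Nat.le_succ _), hjℓ⟩
      rw [stringKer, if_pos hj, SetLike.mem_coe, LinearMap.mem_ker, hf i h hi.1] at hb
      rw [stringKer, if_pos hi]
      exact hb
    · have := hℓ ⟨i.1 + 1, h⟩ (show ℓ.1 < i.1 + 1 by omega)
      rw [Subsingleton.elim b 0, map_zero]
      exact zero_mem _
  · simp [stringKer, if_neg hi]

theorem isCompl_span_singleton_ker {M : Type*} [AddCommGroup M] [Module K M] (f : M →ₗ[K] K)
    {w : M} (hw : f w = 1) : IsCompl (K ∙ w) (LinearMap.ker f) := by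
  constructor
  · rw [Submodule.disjoint_def]
    rintro _ hc hk
    obtain ⟨c, rfl⟩ := Submodule.mem_span_singleton.mp hc
    simp_all
  · rw [codisjoint_iff, eq_top_iff]
    intro a _
    have hker : a - f a • w ∈ LinearMap.ker f := by simp [hw]
    have hspan : f a • w ∈ K ∙ w := Submodule.smul_mem _ _ (Submodule.mem_span_singleton_self w)
    simpa using Submodule.add_mem_sup hspan hker

theorem isCompl_stringSpan_stringKer {k ℓ : Fin r} {v : ∀ i, V i} {f : ∀ i, V i →ₗ[K] K}
    (hfv : ∀ i, k ≤ i → i ≤ ℓ → f i (v i) = 1) (i : Fin r) :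
    IsCompl (stringSpan k ℓ v i) (stringKer k ℓ f i) := by
  by_cases hi : k ≤ i ∧ i ≤ ℓ
  · rw [stringSpan, stringKer, if_pos hi, if_pos hi]
    exact isCompl_span_singleton_ker (f i) (hfv i hi.1 hi.2)
  · rw [stringSpan, stringKer, if_neg hi, if_neg hi]
    exact isCompl_bot_top

theorem IsIndecomposable.exists_interval (hind : IsIndecomposable x)
    (hnz : ∃ i, Nontrivial (V i)) :
    ∃ k ℓ : Fin r, k ≤ ℓ ∧ ∃ f : ∀ i, V i →ₗ[K] K,
      (∀ i, ¬(k ≤ i ∧ i ≤ ℓ) → Subsingleton (V i)) ∧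
      (∀ i, k ≤ i → i ≤ ℓ → Function.Bijective (f i)) ∧
      ∀ (i : Fin r) (h : i.1 + 1 < r), k ≤ i → ∀ b, f ⟨i.1 + 1, h⟩ b = f i (x i h b) := by
  obtain ⟨ℓ, hℓ, htop⟩ := wellFounded_gt.has_min {i | Nontrivial (V i)} hnz
  replace htop : ∀ i, ℓ < i → Subsingleton (V i) := fun i hi =>
    not_nontrivial_iff_subsingleton.mp fun h => htop i h hi
  have : Nontrivial (V ℓ) := hℓ
  obtain ⟨w, hw⟩ := exists_ne (0 : V ℓ)
  set v : ∀ i, V i := fun i => pathMap x i ℓ w with hv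
  have hvℓ : v ℓ = w := by simp [hv, pathMap_self]
  obtain ⟨k, hk, hmin⟩ := wellFounded_lt.has_min {i | v i ≠ 0} ⟨ℓ, show v ℓ ≠ 0 from hvℓ ▸ hw⟩
  replace hmin : ∀ i, i < k → v i = 0 := fun i hi => not_not.mp fun h => hmin i h hi
  have hkℓ : k ≤ ℓ := le_of_not_gt fun h => hk (@Subsingleton.elim _ (htop k h) _ _)
  obtain ⟨g, hg⟩ := Module.Projective.exists_dual_eq_one K hk
  set f : ∀ i, V i →ₗ[K] K := fun i => g ∘ₗ pathMap x k i with hf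
  have hfv : ∀ i, k ≤ i → i ≤ ℓ → f i (v i) = 1 := fun i hki hiℓ => by
    simp only [hf, hv, LinearMap.comp_apply, ← LinearMap.comp_apply (pathMap x k i),
      ← pathMap_trans x hki ℓ hiℓ]
    exact hg
  have hf_step : ∀ (i : Fin r) (h : i.1 + 1 < r), k ≤ i →
      ∀ b, f ⟨i.1 + 1, h⟩ b = f i (x i h b) := fun i h hki b => by
    simp [hf, pathMap_succ x k i.1 h (Fin.le_def.mp hki)]
  have hv_step : ∀ (i : Fin r) (h : i.1 + 1 < r), i.1 + 1 ≤ ℓ.1 →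
      x i h (v ⟨i.1 + 1, h⟩) = v i := fun i h hiℓ => by
    simp [hv, pathMap_eq_comp_pathMap_succ x i h ℓ hiℓ]
  rcases hind _ _ (isSubrep_stringSpan x hv_step hmin) (isSubrep_stringKer x htop hf_step)
      (isCompl_stringSpan_stringKer hfv) with hspan | hker
  · have := hspan ℓ
    rw [stringSpan, if_pos ⟨hkℓ, le_rfl⟩, Submodule.span_singleton_eq_bot, hvℓ] at this
    exact absurd this hw
  refine ⟨k, ℓ, hkℓ, f, fun i hi => ?_, fun i hki hiℓ => ⟨?_, fun c => ⟨c • v i, ?_⟩⟩, hf_step⟩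
  · have := hker i
    rw [stringKer, if_neg hi] at this
    exact Submodule.subsingleton_iff K |>.mp (subsingleton_iff_bot_eq_top.mp this.symm)
  · have := hker i
    rw [stringKer, if_pos ⟨hki, hiℓ⟩] at this
    exact LinearMap.ker_eq_bot.mp this
  · rw [map_smul, hfv i hki hiℓ, smul_eq_mul, mul_one]

end Field

section Complex

variable {r : ℕ}

theorem nontrivial_intervalSpace_iff {k ℓ i : Fin r} :
    Nontrivial (intervalSpace k ℓ i) ↔ k ≤ i ∧ i ≤ ℓ := by
  rw [Submodule.nontrivial_iff_ne_bot, intervalSpace]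
  split_ifs with h <;> simp [h]

theorem subsingleton_intervalSpace {k ℓ i : Fin r} (hi : ¬(k ≤ i ∧ i ≤ ℓ)) :
    Subsingleton (intervalSpace k ℓ i) :=
  not_nontrivial_iff_subsingleton.mp (nontrivial_intervalSpace_iff.not.mpr hi)

theorem coe_intervalMap (k ℓ i : Fin r) (h : i.1 + 1 < r) (w : intervalSpace k ℓ ⟨i.1 + 1, h⟩) :
    (intervalMap k ℓ i h w : ℂ) = if k.1 ≤ i.1 ∧ i.1 + 1 ≤ ℓ.1 then (w : ℂ) else 0 := by
  simp only [intervalMap, LinearMap.coe_mk, AddHom.coe_mk]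
  split_ifs <;> rfl

theorem exists_linearEquiv_intervalSpace {M : Type*} [AddCommGroup M] [Module ℂ M]
    {k ℓ i : Fin r} (f : M →ₗ[ℂ] ℂ) (hout : ¬(k ≤ i ∧ i ≤ ℓ) → Subsingleton M)
    (hin : k ≤ i → i ≤ ℓ → Function.Bijective f) :
    ∃ e : M ≃ₗ[ℂ] intervalSpace k ℓ i, ∀ a, (e a : ℂ) = f a := by
  by_cases hi : k ≤ i ∧ i ≤ ℓ
  · have hmem : ∀ a, f a ∈ intervalSpace k ℓ i := by simp [intervalSpace, hi]
    refine ⟨.ofBijective (f.codRestrict _ hmem) ⟨fun a b hab => (hin hi.1 hi.2).1 ?_,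
      fun c => ?_⟩, fun _ => rfl⟩
    · exact congrArg Subtype.val hab
    · obtain ⟨a, ha⟩ := (hin hi.1 hi.2).2 c
      exact ⟨a, Subtype.ext ha⟩
  · have := hout hi
    have := subsingleton_intervalSpace hi
    have hmem : ∀ a, f a ∈ intervalSpace k ℓ i := fun a => by
      rw [Subsingleton.elim a 0, map_zero]
      exact zero_mem _
    exact ⟨.ofBijective (f.codRestrict _ hmem) ⟨fun _ _ _ => Subsingleton.elim _ _,
      fun _ => ⟨0, Subsingleton.elim _ _⟩⟩, fun _ => rfl⟩

variable {V : Fin r → Type*} [∀ i, AddCommGroup (V i)] [∀ i, Module ℂ (V i)]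
  (x : ∀ (i : Fin r) (h : i.1 + 1 < r), V ⟨i.1 + 1, h⟩ →ₗ[ℂ] V i)

theorem exists_equiv_intervalSpace {k ℓ : Fin r} (f : ∀ i, V i →ₗ[ℂ] ℂ)
    (hout : ∀ i, ¬(k ≤ i ∧ i ≤ ℓ) → Subsingleton (V i))
    (hin : ∀ i, k ≤ i → i ≤ ℓ → Function.Bijective (f i))
    (hf : ∀ (i : Fin r) (h : i.1 + 1 < r), k ≤ i → ∀ b, f ⟨i.1 + 1, h⟩ b = f i (x i h b)) :
    ∃ e : ∀ i, V i ≃ₗ[ℂ] intervalSpace k ℓ i,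
      ∀ (i : Fin r) (h : i.1 + 1 < r) (b : V ⟨i.1 + 1, h⟩),
        e i (x i h b) = intervalMap k ℓ i h (e ⟨i.1 + 1, h⟩ b) := by
  choose e he using fun i => exists_linearEquiv_intervalSpace (f i) (hout i) (hin i)
  refine ⟨e, fun i h b => ?_⟩
  by_cases hi : k ≤ i ∧ i ≤ ℓ
  · by_cases hj : k ≤ ⟨i.1 + 1, h⟩ ∧ ⟨i.1 + 1, h⟩ ≤ ℓ
    · have hiℓ : i.1 + 1 ≤ ℓ.1 := hj.2
      apply Subtype.ext
      rw [he, coe_intervalMap, if_pos ⟨hi.1, hiℓ⟩, he, hf i h hi.1]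
    · have := hout _ hj
      simp only [Subsingleton.elim b 0, map_zero]
  · have := subsingleton_intervalSpace hi
    exact Subsingleton.elim _ _

theorem eq_of_linearEquiv_intervalSpace {k ℓ k' ℓ' : Fin r} (hkℓ : k ≤ ℓ)
    (e : ∀ i, V i ≃ₗ[ℂ] intervalSpace k ℓ i) (e' : ∀ i, V i ≃ₗ[ℂ] intervalSpace k' ℓ' i) :
    k = k' ∧ ℓ = ℓ' := by
  rw [← Set.Icc_eq_Icc_iff hkℓ]
  ext i
  simp only [Set.mem_Icc, ← nontrivial_intervalSpace_iff,
    ((e i).symm.trans (e' i)).toEquiv.nontrivial_congr]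

end Complex

end LinearQuiver

theorem gabriel_typeA_linear_general (r : ℕ)
    (V : Fin r → Type) [∀ i, AddCommGroup (V i)] [∀ i, Module ℂ (V i)]
    (x : ∀ (i : Fin r) (h : i.1 + 1 < r), V ⟨i.1 + 1, h⟩ →ₗ[ℂ] V i)
    (hnz : ∃ i, Nontrivial (V i))
    (hind : ∀ W W' : ∀ i, Submodule ℂ (V i),
      (∀ (i : Fin r) (h : i.1 + 1 < r), Submodule.map (x i h) (W ⟨i.1 + 1, h⟩) ≤ W i) →
      (∀ (i : Fin r) (h : i.1 + 1 < r), Submodule.map (x i h) (W' ⟨i.1 + 1, h⟩) ≤ W' i) →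
      (∀ i, IsCompl (W i) (W' i)) →
      (∀ i, W i = ⊥) ∨ (∀ i, W' i = ⊥)) :
    ∃! p : {q : Fin r × Fin r // q.1 ≤ q.2},
      ∃ e : ∀ i, V i ≃ₗ[ℂ] intervalSpace p.val.1 p.val.2 i,
        ∀ (i : Fin r) (h : i.1 + 1 < r) (v : V ⟨i.1 + 1, h⟩),
          e i (x i h v) = intervalMap p.val.1 p.val.2 i h (e ⟨i.1 + 1, h⟩ v) := by
  obtain ⟨k, ℓ, hkℓ, f, hout, hin, hf⟩ :=
    LinearQuiver.IsIndecomposable.exists_interval x hind hnz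
  obtain ⟨e, he⟩ := LinearQuiver.exists_equiv_intervalSpace x f hout hin hf
  refine ⟨⟨(k, ℓ), hkℓ⟩, ⟨e, he⟩, ?_⟩
  rintro ⟨⟨k', ℓ'⟩, hkℓ'⟩ ⟨e', -⟩
  obtain ⟨rfl, rfl⟩ := LinearQuiver.eq_of_linearEquiv_intervalSpace hkℓ' e' e
  rfl

/-- Gabriel's theorem, type `A`, linear orientation: every nonzero
indecomposable finite-dimensional `ℂ`-representation of the quiver `1 ← 2 ← ⋯ ← r`
is isomorphic to the interval representation `V(k,ℓ)` for a unique pair `k ≤ ℓ`.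
Indecomposability is phrased as: in every direct-sum decomposition into two
subrepresentations, one summand is zero. -/
theorem gabriel_typeA_linear (r : ℕ)
    (V : Fin r → Type) [∀ i, AddCommGroup (V i)] [∀ i, Module ℂ (V i)]
    [∀ i, FiniteDimensional ℂ (V i)]
    (x : ∀ (i : Fin r) (h : i.1 + 1 < r), V ⟨i.1 + 1, h⟩ →ₗ[ℂ] V i)
    (hnz : ∃ i, Nontrivial (V i))
    (hind : ∀ W W' : ∀ i, Submodule ℂ (V i),
      (∀ (i : Fin r) (h : i.1 + 1 < r), Submodule.map (x i h) (W ⟨i.1 + 1, h⟩) ≤ W i) →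
      (∀ (i : Fin r) (h : i.1 + 1 < r), Submodule.map (x i h) (W' ⟨i.1 + 1, h⟩) ≤ W' i) →
      (∀ i, IsCompl (W i) (W' i)) →
      (∀ i, W i = ⊥) ∨ (∀ i, W' i = ⊥)) :
    ∃! p : {q : Fin r × Fin r // q.1 ≤ q.2},
      ∃ e : ∀ i, V i ≃ₗ[ℂ] intervalSpace p.val.1 p.val.2 i,
        ∀ (i : Fin r) (h : i.1 + 1 < r) (v : V ⟨i.1 + 1, h⟩),
          e i (x i h v) = intervalMap p.val.1 p.val.2 i h (e ⟨i.1 + 1, h⟩ v) :=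
  gabriel_typeA_linear_general r V x hnz hind
end
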